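/- Let d_1 ≤ ... ≤ d_p be reals in [0,1] and let λ > 0. Among all binary vectors a ∈ {0,1}^p, the loss L(a) = ∑_i (1 - a_i)(1 - d_i)/(p - ∑_j a_j) + λ ∑_i a_i d_i / (∑_j a_j) (with 0/0 := 0) is minimized by a vector of the form a^{(j)} where a^{(j)}_i = 1 if d_i ≤ d_{(j)} and 0 otherwise, for some j ∈ {0,1,...,p}. In other words, for every a ∈ {0,1}^p there exists j with L(a^{(j)}) ≤ L(a). -/

import Mathlib

/-!
Identify a binary vector with its rejection set `A`, of size `k > 0`, and let `v` be the `k`-th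
smallest d-value. Exchanging elements of `A` with `d > v` for elements outside `A` with `d ≤ v`
lowers both the FDR and the FNR sums, so some `B` with `{d < v} ⊆ B ⊆ {d ≤ v}` and `|B| = k`
does at least as well as `A`. Across this tie block the loss depends only on `s = |B|`, as
`c - E / (p - s) - λ F / s` with `E, F ≥ 0`, a concave function of `s`; so it is minimised at
`B = {d < v}` or `B = {d ≤ v}`, and each of these is empty or a threshold set `{d ≤ d j}`.
-/

open Finset

lemma convexOn_div_Icc {F n N : ℝ} (hF : 0 ≤ F) (hn : 0 ≤ n) (hF0 : n = 0 → F = 0) :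
    ConvexOn ℝ (Set.Icc n N) fun s => F / s := by
  rcases hn.eq_or_lt with rfl | hn
  · simpa [hF0 rfl] using convexOn_const (0 : ℝ) (convex_Icc 0 N)
  · refine (((convexOn_zpow (-1)).smul hF).subset (fun s hs => hn.trans_le hs.1)
      (convex_Icc n N)).congr fun s _ => ?_
    simp [div_eq_mul_inv]

lemma convexOn_div_sub_Icc {E n N P : ℝ} (hE : 0 ≤ E) (hNP : N ≤ P) (hE0 : N = P → E = 0) :
    ConvexOn ℝ (Set.Icc n N) fun s => E / (P - s) := by
  have h := (convexOn_div_Icc (N := P - n) hE (sub_nonneg.2 hNP)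
    fun h => hE0 (by linarith)).comp_affineMap (AffineMap.const ℝ ℝ P - AffineMap.id ℝ ℝ)
  refine (h.subset (fun s hs => ?_) (convex_Icc n N)).congr fun s _ => ?_
  · simp only [Set.mem_preimage, AffineMap.coe_sub, AffineMap.coe_const, AffineMap.coe_id,
      Pi.sub_apply, Function.const_apply, id_eq, Set.mem_Icc]
    constructor <;> linarith [hs.1, hs.2]
  · simp

lemma concaveOn_sub_div_sub_sub_div {c E F P n N : ℝ} (hE : 0 ≤ E) (hF : 0 ≤ F) (hn : 0 ≤ n)
    (hNP : N ≤ P) (hF0 : n = 0 → F = 0) (hE0 : N = P → E = 0) :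
    ConcaveOn ℝ (Set.Icc n N) fun s => c - E / (P - s) - F / s :=
  ((concaveOn_const c (convex_Icc n N)).sub (convexOn_div_sub_Icc hE hNP hE0)).sub
    (convexOn_div_Icc hF hn hF0)

lemma mul_sub_div_le_sub_div {K : Type*} [Field K] [LinearOrder K] [IsStrictOrderedRing K]
    {x u E : K} (hu : 0 ≤ u) : (x * u - E) / x ≤ u - E / x := by
  rcases eq_or_ne x 0 with rfl | hx
  · simpa using hu
  · rw [sub_div, mul_div_cancel_left₀ _ hx]

lemma sum_le_sum_of_card_eq {ι M : Type*} [DecidableEq ι] [AddCommMonoid M] [PartialOrder M]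
    [IsOrderedAddMonoid M] {s t : Finset ι} {f : ι → M} {c : M} (hst : #s = #t)
    (hs : ∀ i ∈ s \ t, f i ≤ c) (ht : ∀ i ∈ t \ s, c ≤ f i) :
    ∑ i ∈ s, f i ≤ ∑ i ∈ t, f i := by
  rw [← sum_inter_add_sum_sdiff s t, ← sum_inter_add_sum_sdiff t s, inter_comm]
  gcongr 1
  calc ∑ i ∈ s \ t, f i ≤ #(s \ t) • c := sum_le_card_nsmul _ _ _ hs
    _ = #(t \ s) • c := by rw [card_sdiff_comm hst]
    _ ≤ ∑ i ∈ t \ s, f i := card_nsmul_le_sum _ _ _ ht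

lemma sum_eq_card_mul_sub_sum_of_subset {ι R : Type*} [DecidableEq ι] [CommRing R]
    {s t : Finset ι} {f : ι → R} {c : R} (hst : s ⊆ t) (hf : ∀ i ∈ t \ s, f i = c) :
    ∑ i ∈ t, f i = #t * c - ∑ i ∈ s, (c - f i) := by
  have : ∑ i ∈ t, (c - f i) = ∑ i ∈ s, (c - f i) :=
    (sum_subset hst fun i hit his => by rw [hf i (mem_sdiff.2 ⟨hit, his⟩), sub_self]).symm
  rw [← this, sum_sub_distrib, sum_const, nsmul_eq_mul]
  ring

section Order

variable {ι α : Type*} [Fintype ι] [LinearOrder α] (d : ι → α)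

lemma exists_filter_lt_eq_filter_le {v : α} (h : ({i | d i < v} : Finset ι).Nonempty) :
    ∃ j, d j < v ∧ ({i | d i < v} : Finset ι) = ({i | d i ≤ d j} : Finset ι) := by
  obtain ⟨j, hj, hmax⟩ := exists_max_image _ d h
  refine ⟨j, (mem_filter.1 hj).2, Finset.ext fun i => ?_⟩
  simp only [mem_filter, mem_univ, true_and]
  exact ⟨fun hi => hmax i (by simpa using hi), fun hi => hi.trans_lt (mem_filter.1 hj).2⟩

lemma exists_card_filter_lt_lt_le_card_filter_le {k : ℕ} (hk : 0 < k)
    (hkι : k ≤ Fintype.card ι) :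
    ∃ j, #({i | d i < d j} : Finset ι) < k ∧ k ≤ #({i | d i ≤ d j} : Finset ι) := by
  have : Nonempty ι := Fintype.card_pos_iff.1 (hk.trans_le hkι)
  obtain ⟨m, -, hm⟩ := exists_max_image univ d univ_nonempty
  have hkm : k ≤ #({i | d i ≤ d m} : Finset ι) := by
    rwa [filter_true_of_mem fun i _ => hm i (mem_univ i), card_univ]
  obtain ⟨j, hj, hmin⟩ :=
    exists_min_image ({j | k ≤ #({i | d i ≤ d j} : Finset ι)} : Finset ι) d
      ⟨m, mem_filter.2 ⟨mem_univ m, hkm⟩⟩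
  refine ⟨j, not_le.1 fun hlo => ?_, (mem_filter.1 hj).2⟩
  obtain ⟨j', hj'v, hj'⟩ := exists_filter_lt_eq_filter_le d (card_pos.1 (hk.trans_le hlo))
  exact (hmin j' (mem_filter.2 ⟨mem_univ _, hj' ▸ hlo⟩)).not_gt hj'v

end Order

section Loss

variable {ι : Type*} [Fintype ι] [DecidableEq ι] (d : ι → ℝ) (lam : ℝ)

noncomputable def loss (a : ι → ℝ) : ℝ :=
  (∑ i, (1 - a i) * (1 - d i)) / ((Fintype.card ι : ℝ) - ∑ j, a j)
    + lam * ((∑ i, a i * d i) / ∑ j, a j)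

noncomputable def rejectionLoss (A : Finset ι) : ℝ :=
  (∑ i ∈ Aᶜ, (1 - d i)) / #Aᶜ + lam * ((∑ i ∈ A, d i) / #A)

variable {d lam}

lemma cast_card_compl (A : Finset ι) : (#Aᶜ : ℝ) = Fintype.card ι - #A := by
  rw [card_compl, Nat.cast_sub (card_le_univ A)]

lemma loss_ite (P : ι → Prop) [DecidablePred P] :
    loss d lam (fun i => if P i then 1 else 0) = rejectionLoss d lam {i | P i} := by
  have hcard : ∑ j, (if P j then (1 : ℝ) else 0) = #({i | P i} : Finset ι) := by simp
  have hsum : ∑ i, (if P i then (1 : ℝ) else 0) * d i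
      = ∑ i ∈ ({i | P i} : Finset ι), d i := by
    simp [sum_filter]
  have hsumc : ∑ i, (1 - if P i then (1 : ℝ) else 0) * (1 - d i)
      = ∑ i ∈ ({i | P i} : Finset ι)ᶜ, (1 - d i) := by
    rw [compl_filter, sum_filter]
    exact sum_congr rfl fun i _ => by split_ifs <;> simp
  rw [loss, rejectionLoss, hcard, hsum, hsumc, cast_card_compl]

lemma rejectionLoss_le_of_card_eq {A B : Finset ι} {v : ℝ} (hlam : 0 ≤ lam) (hcard : #B = #A)
    (hB : ∀ i ∈ B \ A, d i ≤ v) (hA : ∀ i ∈ A \ B, v ≤ d i) :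
    rejectionLoss d lam B ≤ rejectionLoss d lam A := by
  have hcompl : #Bᶜ = #Aᶜ := by simp [card_compl, hcard]
  unfold rejectionLoss
  rw [hcompl, hcard]
  gcongr ?_ / _ + lam * (?_ / _)
  · refine sum_le_sum_of_card_eq hcompl (c := 1 - v) (fun i hi => ?_) fun i hi => ?_
    · have := hA i (by simpa [and_comm] using hi)
      linarith
    · have := hB i (by simpa [and_comm] using hi)
      linarith
  · exact sum_le_sum_of_card_eq hcard hB hA

lemma rejectionLoss_eq_of_subset_of_subset {v : ℝ} {C : Finset ι}
    (hLo : ({i | d i < v} : Finset ι) ⊆ C) (hHi : C ⊆ ({i | d i ≤ v} : Finset ι)) :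
    rejectionLoss d lam C =
      (#Cᶜ * (1 - v) - ∑ i ∈ ({i | d i ≤ v} : Finset ι)ᶜ, ((1 - v) - (1 - d i))) / #Cᶜ
        + lam * ((#C * v - ∑ i ∈ {i | d i < v}, (v - d i)) / #C) := by
  rw [rejectionLoss, sum_eq_card_mul_sub_sum_of_subset hLo fun i hi => ?_,
    sum_eq_card_mul_sub_sum_of_subset (compl_subset_compl.2 hHi) fun i hi => ?_]
  · simp only [mem_sdiff, mem_compl, mem_filter, mem_univ, true_and, not_not] at hi
    rw [le_antisymm hi.2 (not_lt.1 fun h => hi.1 (hLo (by simpa using h)))]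
  · simp only [mem_sdiff, mem_filter, mem_univ, true_and, not_lt] at hi
    exact le_antisymm (by simpa using hHi hi.1) hi.2

lemma min_rejectionLoss_le {v : ℝ} (hv : v ∈ Set.Icc 0 1) (hlam : 0 ≤ lam) {B : Finset ι}
    (hLo : ({i | d i < v} : Finset ι) ⊆ B) (hHi : B ⊆ ({i | d i ≤ v} : Finset ι))
    (hB : 0 < #B) (hBι : #B < Fintype.card ι) :
    min (rejectionLoss d lam {i | d i < v}) (rejectionLoss d lam {i | d i ≤ v})
      ≤ rejectionLoss d lam B := by
  set Lo : Finset ι := {i | d i < v}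
  set Hi : Finset ι := {i | d i ≤ v}
  set E := ∑ i ∈ Hiᶜ, ((1 - v) - (1 - d i))
  set F := ∑ i ∈ Lo, (v - d i)
  set ℓ : ℝ → ℝ := fun s => (1 - v) + lam * v - E / (Fintype.card ι - s) - lam * F / s
  have hE : 0 ≤ E := sum_nonneg fun i hi => by
    simp only [Hi, compl_filter, not_le, mem_filter, mem_univ, true_and] at hi
    linarith
  have hF : 0 ≤ F := sum_nonneg fun i hi => sub_nonneg.2 (mem_filter.1 hi).2.le
  -- `≤` rather than `=` only because of `0 / 0 = 0` when `C = ∅` or `C = univ`.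
  have hle : ∀ C, Lo ⊆ C → C ⊆ Hi → rejectionLoss d lam C ≤ ℓ #C := by
    intro C hLoC hCHi
    rw [rejectionLoss_eq_of_subset_of_subset hLoC hCHi]
    calc _ ≤ (1 - v - E / #Cᶜ) + lam * (v - F / #C) :=
          add_le_add (mul_sub_div_le_sub_div (by linarith [hv.2]))
            (mul_le_mul_of_nonneg_left (mul_sub_div_le_sub_div hv.1) hlam)
      _ = ℓ #C := by rw [cast_card_compl]; ring
  have heq : rejectionLoss d lam B = ℓ #B := by
    have hBc : (#Bᶜ : ℝ) ≠ 0 := by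
      rw [cast_card_compl]
      exact sub_ne_zero.2 (by exact_mod_cast hBι.ne')
    rw [rejectionLoss_eq_of_subset_of_subset hLo hHi, sub_div, sub_div,
      mul_div_cancel_left₀ _ hBc, mul_div_cancel_left₀ _ (by exact_mod_cast hB.ne'),
      cast_card_compl]
    ring
  have hconc : ConcaveOn ℝ (Set.Icc (#Lo : ℝ) #Hi) ℓ := by
    refine concaveOn_sub_div_sub_sub_div hE (mul_nonneg hlam hF) (Nat.cast_nonneg _)
      (by exact_mod_cast card_le_univ Hi) (fun h => ?_) fun h => ?_
    · simp [F, card_eq_zero.1 (by exact_mod_cast h : #Lo = 0)]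
    · simp [E, (card_eq_iff_eq_univ Hi).1 (by exact_mod_cast h)]
  have hLoHi : #Lo ≤ #Hi := card_le_card (hLo.trans hHi)
  calc _ ≤ min (ℓ #Lo) (ℓ #Hi) :=
        min_le_min (hle Lo subset_rfl (hLo.trans hHi)) (hle Hi (hLo.trans hHi) subset_rfl)
    _ ≤ ℓ #B := hconc.min_le_of_mem_Icc (Set.left_mem_Icc.2 (by exact_mod_cast hLoHi))
        (Set.right_mem_Icc.2 (by exact_mod_cast hLoHi))
        ⟨by exact_mod_cast card_le_card hLo, by exact_mod_cast card_le_card hHi⟩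
    _ = _ := heq.symm

theorem exists_threshold_rejectionLoss_le (hd : ∀ i, d i ∈ Set.Icc 0 1) (hlam : 0 ≤ lam)
    (A : Finset ι) :
    rejectionLoss d lam ∅ ≤ rejectionLoss d lam A ∨
      ∃ j, rejectionLoss d lam {i | d i ≤ d j} ≤ rejectionLoss d lam A := by
  rcases A.eq_empty_or_nonempty with rfl | hA
  · exact Or.inl le_rfl
  obtain ⟨j, hlo, hhi⟩ :=
    exists_card_filter_lt_lt_le_card_filter_le d hA.card_pos (card_le_univ A)
  have hLoHi : ({i | d i < d j} : Finset ι) ⊆ ({i | d i ≤ d j} : Finset ι) :=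
    monotone_filter_right univ fun _ _ => le_of_lt
  obtain ⟨B, hLoB, hBHi, hB⟩ := exists_subsuperset_card_eq hLoHi hlo.le hhi
  have hBA : rejectionLoss d lam B ≤ rejectionLoss d lam A :=
    rejectionLoss_le_of_card_eq (v := d j) hlam hB
      (fun i hi => by simpa using hBHi (mem_sdiff.1 hi).1)
      fun i hi => not_lt.1 fun h => (mem_sdiff.1 hi).2 (hLoB (by simpa using h))
  rcases (card_le_univ B).lt_or_eq with hBι | hBι
  · rcases min_le_iff.1 (min_rejectionLoss_le (hd j) hlam hLoB hBHi (hB ▸ hA.card_pos) hBι)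
      with hLo | hHi
    · rcases ({i | d i < d j} : Finset ι).eq_empty_or_nonempty with hLoe | hLoe
      · exact Or.inl (hLoe ▸ hLo.trans hBA)
      · obtain ⟨j', -, hj'⟩ := exists_filter_lt_eq_filter_le d hLoe
        exact Or.inr ⟨j', hj' ▸ hLo.trans hBA⟩
    · exact Or.inr ⟨j, hHi.trans hBA⟩
  · have hHiB : ({i | d i ≤ d j} : Finset ι) = B :=
      eq_of_superset_of_card_ge hBHi (hBι ▸ card_le_univ _)
    exact Or.inr ⟨j, hHiB ▸ hBA⟩

end Loss

theorem stmt2_general (p : ℕ) (d : Fin p → ℝ)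
    (hbd : ∀ i, d i ∈ Set.Icc (0 : ℝ) 1) (lam : ℝ) (hlam : 0 < lam)
    (L : (Fin p → ℝ) → ℝ)
    (hL : ∀ a, L a = (∑ i, (1 - a i) * (1 - d i)) / ((p : ℝ) - ∑ j, a j)
        + lam * ((∑ i, a i * d i) / (∑ j, a j)))
    (a : Fin p → ℝ) (ha : ∀ i, a i = 0 ∨ a i = 1) :
    L (fun _ => 0) ≤ L a ∨
      ∃ j : Fin p, L (fun i => if d i ≤ d j then 1 else 0) ≤ L a := by
  obtain rfl : L = loss d lam := funext fun b => by rw [hL, loss, Fintype.card_fin]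
  have ha' : a = fun i => if a i = 1 then 1 else 0 :=
    funext fun i => by rcases ha i with h | h <;> simp [h]
  have hzero : loss d lam (fun _ => 0) = rejectionLoss d lam ∅ := by
    simpa using loss_ite (d := d) (lam := lam) fun _ => False
  rw [ha', hzero, loss_ite]
  simpa only [loss_ite] using exists_threshold_rejectionLoss_le hbd hlam.le {i | a i = 1}

theorem stmt2 (p : ℕ) (hp : 0 < p) (d : Fin p → ℝ) (hmono : Monotone d)
    (hbd : ∀ i, d i ∈ Set.Icc (0 : ℝ) 1) (lam : ℝ) (hlam : 0 < lam)
    (L : (Fin p → ℝ) → ℝ)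
    (hL : ∀ a, L a = (∑ i, (1 - a i) * (1 - d i)) / ((p : ℝ) - ∑ j, a j)
        + lam * ((∑ i, a i * d i) / (∑ j, a j)))
    (a : Fin p → ℝ) (ha : ∀ i, a i = 0 ∨ a i = 1) :
    L (fun _ => 0) ≤ L a ∨
      ∃ j : Fin p, L (fun i => if d i ≤ d j then 1 else 0) ≤ L a :=
  stmt2_general p d hbd lam hlam L hL a ha
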